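/- The Fibonacci admissible sequence is not normal, so the F-Pascal matrices do not form a group: (1 −_F 1)^2 = Σ_{m=0}^{2} (−1)^m·C_F(2,m) = 2 − F_2 = 1 ≠ 0 in ℚ; consequently, for every n ≥ 3 the n×n F-Pascal matrices satisfy P_F[1]·P_F[−1] ≠ I. -/
import Mathlib


/-- The F-factorial `F_n! = F_n·F_{n−1}!`, `F_0! = 1`, built from Fibonacci numbers. -/
def fibFact : ℕ → ℚ
  | 0 => 1
  | n + 1 => (Nat.fib (n + 1) : ℚ) * fibFact n

/-- The fibonomial coefficient `C_F(n,k) = F_n!/(F_k!·F_{n−k}!) ∈ ℚ`. -/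
def fibBinom (n k : ℕ) : ℚ :=
  fibFact n / (fibFact k * fibFact (n - k))

/-- The `n×n` F-Pascal matrix `P_F[x]` over `ℚ`. -/
def fibPascal (n : ℕ) (x : ℚ) : Matrix (Fin n) (Fin n) ℚ :=
  Matrix.of fun i j =>
    if (j : ℕ) ≤ (i : ℕ) then x ^ ((i : ℕ) - (j : ℕ)) * fibBinom i j else 0

lemma fibFact_vals : fibFact 0 = 1 ∧ fibFact 1 = 1 ∧ fibFact 2 = 1 := by
  norm_num [fibFact]

/-- The Fibonacci admissible sequence is not normal, so the F-Pascal matrices do not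
form a group: `(1 −_F 1)^2 = Σ_{m=0}^{2} (−1)^m·C_F(2,m) = 2 − F_2 = 1 ≠ 0`, and for
every `n ≥ 3` the `n×n` F-Pascal matrices satisfy `P_F[1]·P_F[−1] ≠ I`. -/
theorem fibPascal_not_group :
    (∑ m ∈ Finset.range (2 + 1), (-1 : ℚ) ^ m * fibBinom 2 m = 2 - (Nat.fib 2 : ℚ)) ∧
    (2 - (Nat.fib 2 : ℚ) = 1) ∧ ((1 : ℚ) ≠ 0) ∧
    ∀ n : ℕ, 3 ≤ n → fibPascal n 1 * fibPascal n (-1) ≠ 1 := by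
  refine ⟨?_, by norm_num, by norm_num, ?_⟩
  · simp [Finset.sum_range_succ, fibBinom, fibFact]
    norm_num
  · intro n hn h
    have h2 : (2 : ℕ) < n := by omega
    have h0 : (0 : ℕ) < n := by omega
    have key := congrFun (congrFun h ⟨2, h2⟩) ⟨0, h0⟩
    rw [Matrix.mul_apply] at key
    have hone : (1 : Matrix (Fin n) (Fin n) ℚ) ⟨2, h2⟩ ⟨0, h0⟩ = 0 := by
      rw [Matrix.one_apply_ne]
      intro hc
      exact absurd (congrArg Fin.val hc) (by norm_num)
    rw [hone] at key
    have hsum : ∑ k : Fin n, fibPascal n 1 ⟨2, h2⟩ k * fibPascal n (-1) k ⟨0, h0⟩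
        = 1 := by
      have hsub : ({⟨0, h0⟩, ⟨1, by omega⟩, ⟨2, h2⟩} : Finset (Fin n)) ⊆ Finset.univ :=
        Finset.subset_univ _
      rw [← Finset.sum_subset hsub]
      · rw [Finset.sum_insert (by simp [Fin.ext_iff]), Finset.sum_insert (by simp [Fin.ext_iff]),
          Finset.sum_singleton]
        simp [fibPascal, fibBinom, fibFact]
      · intro k _ hk
        have hkv : ¬ (k : ℕ) ≤ 2 := by
          simp [Fin.ext_iff] at hk
          rcases hk with ⟨h0', h1', h2'⟩
          omega
        have : fibPascal n 1 ⟨2, h2⟩ k = 0 := by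
          simp only [fibPascal, Matrix.of_apply]
          exact if_neg hkv
        rw [this, zero_mul]
    rw [hsum] at key
    exact one_ne_zero key
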